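/- arXiv:2209.09411 — 2 statements merged into one kernel-verified Lean document; each statement's English description precedes it below -/
import Mathlib

section
/- Proposition 1, case C₁ (shepherd behind sheep 1): Let K₁, K₂ ≥ 0, K₃ > 0, R > 0, and c < 0 with c⁻² − (1−c)⁻² > 2(K₁ − R²K₂ + R²·max(K₂, R))/K₃. Let Δ ∈ ℝ² be nonzero with ‖Δ‖ ≤ R, and define f = K₃c/(|c|³‖Δ‖³) − K₃(c−1)/(|c−1|³‖Δ‖³) + 2(K₁−K₂‖Δ‖²)/‖Δ‖³. Then f < −2, and consequently ‖Δ + f·Δ‖ > ‖Δ‖. -/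
theorem prop1_case_C1
    (K₁ K₂ K₃ R c : ℝ) (hK₁ : 0 ≤ K₁) (hK₂ : 0 ≤ K₂) (hK₃ : 0 < K₃) (hR : 0 < R)
    (hc : c < 0)
    (hC₁ : (c ^ 2)⁻¹ - ((1 - c) ^ 2)⁻¹ > 2 * (K₁ - R ^ 2 * K₂ + R ^ 2 * max K₂ R) / K₃)
    (Δ : EuclideanSpace ℝ (Fin 2)) (hΔ : Δ ≠ 0) (hΔR : ‖Δ‖ ≤ R)
    (f : ℝ)
    (hf : f = K₃ * c / (|c| ^ 3 * ‖Δ‖ ^ 3) - K₃ * (c - 1) / (|c - 1| ^ 3 * ‖Δ‖ ^ 3)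
            + 2 * (K₁ - K₂ * ‖Δ‖ ^ 2) / ‖Δ‖ ^ 3) :
    f < -2 ∧ ‖Δ + f • Δ‖ > ‖Δ‖ := by
  have hn : 0 < ‖Δ‖ := norm_pos_iff.mpr hΔ
  set n := ‖Δ‖ with hndef
  have hcabs : |c| = -c := abs_of_neg hc
  have hc1 : (0:ℝ) < 1 - c := by linarith
  have hc1abs : |c - 1| = 1 - c := by rw [abs_sub_comm]; exact abs_of_pos hc1
  have hc0 : c ≠ 0 := ne_of_lt hc
  have hc10 : (1 - c) ≠ 0 := ne_of_gt hc1
  set A : ℝ := (c ^ 2)⁻¹ - ((1 - c) ^ 2)⁻¹ with hA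
  have hfA : f = (-(K₃ * A) + 2 * (K₁ - K₂ * n ^ 2)) / n ^ 3 := by
    have e1 : K₃ * c / (|c| ^ 3 * n ^ 3) = -(K₃ * (c ^ 2)⁻¹) / n ^ 3 := by
      rw [hcabs]
      rw [div_eq_div_iff (ne_of_gt (mul_pos (pow_pos (neg_pos.mpr hc) 3) (pow_pos hn 3))) (by positivity)]
      field_simp
    have e2 : K₃ * (c - 1) / (|c - 1| ^ 3 * n ^ 3) = -(K₃ * ((1 - c) ^ 2)⁻¹) / n ^ 3 := by
      rw [hc1abs]
      rw [div_eq_div_iff (by positivity) (by positivity)]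
      field_simp
      ring
    rw [hf, e1, e2, hA]
    ring

  have hKA : K₃ * A > 2 * (K₁ - R ^ 2 * K₂ + R ^ 2 * max K₂ R) := by
    have := (div_lt_iff₀ hK₃).mp hC₁
    linarith [this]
  have hmaxK : K₂ ≤ max K₂ R := le_max_left _ _
  have hmaxR : R ≤ max K₂ R := le_max_right _ _
  have hn3 : n ^ 3 ≤ n ^ 2 * max K₂ R := by
    nlinarith [sq_nonneg n, hn.le]
  have hkey : K₁ - K₂ * n ^ 2 + n ^ 3 ≤ K₁ - R ^ 2 * K₂ + R ^ 2 * max K₂ R := by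
    nlinarith [mul_le_mul_of_nonneg_left hmaxK (sub_nonneg.mpr (mul_self_le_mul_self hn.le hΔR)),
      sq_nonneg (R - n)]
  have hflt : f < -2 := by
    rw [hfA]
    rw [div_lt_iff₀ (by positivity : (0:ℝ) < n ^ 3)]
    nlinarith
  refine ⟨hflt, ?_⟩
  have heq : Δ + f • Δ = (1 + f) • Δ := by
    rw [add_smul, one_smul]
  rw [heq, norm_smul, Real.norm_eq_abs]
  have h1f : |1 + f| > 1 := by
    rw [abs_of_neg (by linarith)]
    linarith
  nlinarith
end

section
/- Proposition 1, case C₃ (shepherd beyond sheep 2): Let K₁, K₂ ≥ 0, K₃ > 0, R > 0, and c > 1 with (c−1)⁻² − c⁻² > 2(K₁ − R²K₂ + R²·max(K₂, R))/K₃. Let Δ ∈ ℝ² be nonzero with ‖Δ‖ ≤ R, and define f = K₃c/(|c|³‖Δ‖³) − K₃(c−1)/(|c−1|³‖Δ‖³) + 2(K₁−K₂‖Δ‖²)/‖Δ‖³. Then f < −2, and consequently ‖Δ + f·Δ‖ > ‖Δ‖. -/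
theorem prop1_case_C3
    (K₁ K₂ K₃ R c : ℝ) (hK₁ : 0 ≤ K₁) (hK₂ : 0 ≤ K₂) (hK₃ : 0 < K₃) (hR : 0 < R)
    (hc : 1 < c)
    (hC₃ : ((c - 1) ^ 2)⁻¹ - (c ^ 2)⁻¹ > 2 * (K₁ - R ^ 2 * K₂ + R ^ 2 * max K₂ R) / K₃)
    (Δ : EuclideanSpace ℝ (Fin 2)) (hΔ : Δ ≠ 0) (hΔR : ‖Δ‖ ≤ R)
    (f : ℝ)
    (hf : f = K₃ * c / (|c| ^ 3 * ‖Δ‖ ^ 3) - K₃ * (c - 1) / (|c - 1| ^ 3 * ‖Δ‖ ^ 3)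
            + 2 * (K₁ - K₂ * ‖Δ‖ ^ 2) / ‖Δ‖ ^ 3) :
    f < -2 ∧ ‖Δ + f • Δ‖ > ‖Δ‖ := by
  set d := ‖Δ‖ with hdd
  have hd : 0 < d := norm_pos_iff.mpr hΔ
  have hc0 : (0:ℝ) < c := lt_trans one_pos hc
  have hc1 : (0:ℝ) < c - 1 := by linarith
  have hd3 : 0 < d ^ 3 := by positivity
  rw [abs_of_pos hc0, abs_of_pos hc1] at hf
  have hf' : f * d ^ 3 = K₃ * (c ^ 2)⁻¹ - K₃ * ((c - 1) ^ 2)⁻¹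
      + 2 * (K₁ - K₂ * d ^ 2) := by
    rw [hf]; field_simp
  have hM1 : K₂ ≤ max K₂ R := le_max_left _ _
  have hM2 : R ≤ max K₂ R := le_max_right _ _
  have hC : K₃ * (((c - 1) ^ 2)⁻¹ - (c ^ 2)⁻¹)
      > 2 * (K₁ - R ^ 2 * K₂ + R ^ 2 * max K₂ R) := by
    rw [gt_iff_lt, div_lt_iff₀ hK₃] at hC₃
    linarith [hC₃]
  have key : f * d ^ 3 < -2 * d ^ 3 := by
    nlinarith [mul_nonneg (mul_nonneg (sub_nonneg.mpr hΔR) (by linarith : (0:ℝ) ≤ R + d))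
        (sub_nonneg.mpr hM1),
      mul_nonneg (mul_nonneg hd.le hd.le) (by linarith : (0:ℝ) ≤ max K₂ R - d)]
  have hflt : f < -2 := by
    have := (mul_lt_mul_iff_left₀ hd3).mp key
    exact this
  refine ⟨hflt, ?_⟩
  have : Δ + f • Δ = (1 + f) • Δ := by
    rw [add_smul, one_smul]
  rw [this, norm_smul]
  have h1 : (1:ℝ) < |1 + f| := by
    rw [abs_of_neg (by linarith : 1 + f < 0)]; linarith
  calc d = 1 * d := (one_mul d).symm
    _ < |1 + f| * d := by exact mul_lt_mul_of_pos_right h1 hd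
    _ = ‖1 + f‖ * d := by rw [Real.norm_eq_abs]
end
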